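/- arXiv:1610.02557 — 2 statements merged into one kernel-verified Lean document; each statement's English description precedes it below -/
import Mathlib

section
/- Let X be a Banach lattice, ε ≥ 0, and let T : X → X be a bounded linear operator that is ε-band preserving. Then for every x ∈ X with ‖x‖ ≤ 1 and every ε' > ε, there exist λ > 0 and z ∈ X with ‖z‖ ≤ ε' such that |T x| ≤ λ·|x| + z. -/
/-!
Put `u = |x|`, `w = |T x|` and `y = (w - n • u)⁺`, so that `w ≤ n • u + y`. The part
`m = u ⊓ y` of `y` that overlaps `u` is small: `(n + 1) • m ≤ w`, so `‖m‖ ≤ ‖T‖ / (n + 1)`.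
The rest `y - m` is disjoint from `u - m`, and truncating `x` at level `u - m` moves it by at
most `m`; applying `ε`-band preservation to the truncated vector bounds `‖y - m‖` by
`ε + ‖T‖ ‖m‖`. Hence `‖y‖ ≤ ε + (‖T‖ + 1) ‖T‖ / (n + 1)`, which is `≤ ε'` for large `n`.
-/

/-- `T` is `ε`-band preserving. -/
def IsEpsBandPreserving {X : Type*} [NormedAddCommGroup X] [Lattice X]
    (ε : ℝ) (T : X → X) : Prop :=
  ∀ x y : X, 0 ≤ y → |x| ⊓ y = 0 → ‖|T x| ⊓ y‖ ≤ ε * ‖x‖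

section LatticeOrderedGroup

variable {α : Type*} [AddCommGroup α] [Lattice α] [IsOrderedAddMonoid α]

lemma le_of_le_add_of_inf_eq_zero {a b c : α} (hb : 0 ≤ b) (h : a ≤ b + c)
    (hac : a ⊓ c = 0) : a ≤ b :=
  sub_nonpos.1 <| hac ▸ le_inf (sub_le_self a hb) (sub_le_iff_le_add'.2 h)

lemma add_inf_eq_zero {a b c : α} (hac : a ⊓ c = 0) (hbc : b ⊓ c = 0) : (a + b) ⊓ c = 0 := by
  have ha : 0 ≤ a := hac ▸ inf_le_left
  have hb : 0 ≤ b := hbc ▸ inf_le_left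
  have hc : 0 ≤ c := hac ▸ inf_le_right
  refine le_antisymm (hbc ▸ le_inf ?_ inf_le_right) (le_inf (add_nonneg ha hb) hc)
  calc (a + b) ⊓ c ≤ (a + b) ⊓ (c + b) := inf_le_inf_left _ (le_add_of_nonneg_right hb)
    _ = b := by rw [← inf_add, hac, zero_add]

lemma nsmul_inf_eq_zero {a c : α} (h : a ⊓ c = 0) : ∀ n : ℕ, (n • a) ⊓ c = 0
  | 0 => by rw [zero_nsmul]; exact inf_eq_left.2 (h ▸ inf_le_right)
  | n + 1 => by rw [succ_nsmul]; exact add_inf_eq_zero (nsmul_inf_eq_zero h n) h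

lemma succ_nsmul_inf_posPart_sub_nsmul_le {u w : α} (hu : 0 ≤ u) (hw : 0 ≤ w) (n : ℕ) :
    (n + 1) • (u ⊓ (w - n • u)⁺) ≤ w := by
  set d := w - n • u with hd
  set m := u ⊓ d⁺
  have hle : (n + 1) • m ≤ w + d⁻ :=
    calc (n + 1) • m = n • m + m := succ_nsmul m n
      _ ≤ n • u + d⁺ := add_le_add (nsmul_le_nsmul_right inf_le_left n) inf_le_right
      _ = w + d⁻ := by rw [eq_add_of_sub_eq (posPart_sub_negPart d), hd]; abel
  have hdisj : m ⊓ d⁻ = 0 :=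
    le_antisymm ((inf_le_inf_right _ inf_le_right).trans (posPart_inf_negPart_eq_zero d).le)
      (le_inf (le_inf hu (posPart_nonneg d)) (negPart_nonneg d))
  exact le_of_le_add_of_inf_eq_zero hw hle (nsmul_inf_eq_zero hdisj _)

lemma abs_inf_sup_neg_le {c : α} (hc : 0 ≤ c) (x : α) : |x ⊓ c ⊔ -c| ≤ c :=
  abs_le'.2 ⟨sup_le inf_le_right (neg_le_self hc), neg_le.2 le_sup_right⟩

lemma abs_sub_inf_sup_neg_le (x c : α) : |x - x ⊓ c ⊔ -c| ≤ (|x| - c)⁺ := by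
  refine abs_le'.2 ⟨?_, ?_⟩
  · calc x - x ⊓ c ⊔ -c ≤ x - x ⊓ c := sub_le_sub_left le_sup_left x
      _ = (x - c)⁺ := by rw [inf_eq_sub_posPart_sub, sub_sub_cancel]
      _ ≤ (|x| - c)⁺ := posPart_mono (sub_le_sub_right (le_abs_self x) c)
  · rw [neg_sub, sup_sub]
    refine sup_le ((sub_nonpos.2 inf_le_left).trans (posPart_nonneg _)) ?_
    calc -c - x = -x - c := by abel
      _ ≤ |x| - c := sub_le_sub_right (neg_le_abs x) c
      _ ≤ (|x| - c)⁺ := le_posPart _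

/-- Truncating `x` at the level `|x| - |x| ⊓ y`. -/
lemma exists_abs_inf_sub_inf_eq_zero_abs_sub_le (x : α) {y : α} (hy : 0 ≤ y) :
    ∃ x', |x'| ≤ |x| ∧ |x'| ⊓ (y - |x| ⊓ y) = 0 ∧ |x - x'| ≤ |x| ⊓ y := by
  set m := |x| ⊓ y
  have hm : 0 ≤ m := le_inf (abs_nonneg x) hy
  have hc : 0 ≤ |x| - m := sub_nonneg.2 inf_le_left
  have hx' := abs_inf_sup_neg_le hc x
  refine ⟨x ⊓ (|x| - m) ⊔ -(|x| - m), hx'.trans (sub_le_self _ hm), ?_, ?_⟩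
  · refine le_antisymm ?_ (le_inf (abs_nonneg _) (sub_nonneg.2 inf_le_right))
    calc _ ≤ (|x| - m) ⊓ (y - m) := inf_le_inf_right _ hx'
      _ = 0 := by rw [← inf_sub, sub_self]
  · simpa [sub_sub_cancel, posPart_eq_self.2 hm] using abs_sub_inf_sup_neg_le x (|x| - m)

end LatticeOrderedGroup

section SolidNorm

variable {X : Type*} [NormedAddCommGroup X] [Lattice X] [HasSolidNorm X] [IsOrderedAddMonoid X]

lemma norm_le_norm_of_nonneg_of_le {a b : X} (ha : 0 ≤ a) (hab : a ≤ b) : ‖a‖ ≤ ‖b‖ :=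
  norm_le_norm_of_abs_le_abs <| by rwa [abs_of_nonneg ha, abs_of_nonneg (ha.trans hab)]

variable [NormedSpace ℝ X]

lemma succ_mul_norm_inf_posPart_sub_nsmul_le {u w : X} (hu : 0 ≤ u) (hw : 0 ≤ w) (n : ℕ) :
    ((n : ℝ) + 1) * ‖u ⊓ (w - n • u)⁺‖ ≤ ‖w‖ := by
  have h := norm_le_norm_of_nonneg_of_le (nsmul_nonneg (le_inf hu (posPart_nonneg _)) (n + 1))
    (succ_nsmul_inf_posPart_sub_nsmul_le hu hw n)
  rwa [RCLike.norm_nsmul ℝ, nsmul_eq_mul, Nat.cast_succ] at h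

lemma IsEpsBandPreserving.norm_le_of_le_abs_apply {ε : ℝ} (hε : 0 ≤ ε) {T : X →L[ℝ] X}
    (hT : IsEpsBandPreserving ε T) {x y : X} (hy0 : 0 ≤ y) (hy : y ≤ |T x|) :
    ‖y‖ ≤ ε * ‖x‖ + (‖T‖ + 1) * ‖|x| ⊓ y‖ := by
  set m := |x| ⊓ y
  have hm : 0 ≤ m := le_inf (abs_nonneg x) hy0
  obtain ⟨x', hx'x, hdisj, hxx'⟩ := exists_abs_inf_sub_inf_eq_zero_abs_sub_le x hy0
  have hband : ‖|T x'| ⊓ (y - m)‖ ≤ ε * ‖x‖ :=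
    (hT x' (y - m) (sub_nonneg.2 inf_le_right) hdisj).trans <|
      mul_le_mul_of_nonneg_left (norm_le_norm_of_abs_le_abs (by simpa using hx'x)) hε
  have hmove : ‖|T x| - |T x'|‖ ≤ ‖T‖ * ‖m‖ :=
    calc ‖|T x| - |T x'|‖ ≤ ‖T (x - x')‖ := by rw [map_sub]; exact norm_abs_sub_abs _ _
      _ ≤ ‖T‖ * ‖x - x'‖ := T.le_opNorm _
      _ ≤ ‖T‖ * ‖m‖ := by
        gcongr; exact norm_le_norm_of_abs_le_abs (by rwa [abs_of_nonneg hm])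
  have hym : |T x| ⊓ (y - m) = y - m := inf_eq_right.2 ((sub_le_self _ hm).trans hy)
  calc ‖y‖ = ‖(|T x| ⊓ (y - m) - |T x'| ⊓ (y - m)) + |T x'| ⊓ (y - m) + m‖ := by
        rw [sub_add_cancel, hym, sub_add_cancel]
    _ ≤ ‖|T x| ⊓ (y - m) - |T x'| ⊓ (y - m)‖ + ‖|T x'| ⊓ (y - m)‖ + ‖m‖ := norm_add₃_le
    _ ≤ ‖T‖ * ‖m‖ + ε * ‖x‖ + ‖m‖ := by
        gcongr; exact (norm_inf_sub_inf_le_norm _ _ _).trans hmove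
    _ = ε * ‖x‖ + (‖T‖ + 1) * ‖m‖ := by ring

end SolidNorm

theorem domination_of_epsBP_general {X : Type*} [NormedAddCommGroup X] [Lattice X] [HasSolidNorm X]
    [IsOrderedAddMonoid X]
    [NormedSpace ℝ X] (ε : ℝ) (hε : 0 ≤ ε) (T : X →L[ℝ] X)
    (hT : IsEpsBandPreserving ε ⇑T) :
    ∀ x : X, ‖x‖ ≤ 1 → ∀ ε' : ℝ, ε < ε' →
      ∃ lam : ℝ, 0 < lam ∧ ∃ z : X, ‖z‖ ≤ ε' ∧ |T x| ≤ lam • |x| + z := by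
  intro x hx ε' hε'
  -- `λ` is a natural number: nothing relates the `ℝ`-action to the order of `X`.
  obtain ⟨n, hn⟩ := exists_nat_gt (‖T‖ * (‖T‖ + 1) / (ε' - ε))
  have hn0 : (0 : ℝ) < n := hn.trans_le' (by have := sub_pos.2 hε'; positivity)
  set y := (|T x| - n • |x|)⁺
  have hm : ((n : ℝ) + 1) * ‖|x| ⊓ y‖ ≤ ‖T‖ :=
    calc ((n : ℝ) + 1) * ‖|x| ⊓ y‖ ≤ ‖|T x|‖ :=
          succ_mul_norm_inf_posPart_sub_nsmul_le (abs_nonneg x) (abs_nonneg _) n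
      _ ≤ ‖T‖ * 1 := by rw [norm_abs_eq_norm]; exact T.le_opNorm_of_le hx
      _ = ‖T‖ := mul_one _
  have hy : ‖y‖ ≤ ε * ‖x‖ + (‖T‖ + 1) * ‖|x| ⊓ y‖ :=
    hT.norm_le_of_le_abs_apply hε (posPart_nonneg _)
      (sup_le (sub_le_self _ (nsmul_nonneg (abs_nonneg x) n)) (abs_nonneg _))
  refine ⟨n, hn0, y, ?_, by rw [Nat.cast_smul_eq_nsmul]; exact sub_le_iff_le_add'.1 (le_posPart _)⟩
  rw [div_lt_iff₀ (sub_pos.2 hε')] at hn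
  nlinarith [norm_nonneg T, norm_nonneg (|x| ⊓ y), mul_le_mul_of_nonneg_left hx hε]

/-- If `T` is a bounded linear operator on a Banach lattice which is `ε`-band preserving,
then for every `x` in the unit ball and every `ε' > ε` there exist `λ > 0` and `z` with
`‖z‖ ≤ ε'` such that `|T x| ≤ λ|x| + z`. -/
theorem domination_of_epsBP {X : Type*} [NormedAddCommGroup X] [Lattice X] [HasSolidNorm X]
    [IsOrderedAddMonoid X]
    [NormedSpace ℝ X] [CompleteSpace X] (ε : ℝ) (hε : 0 ≤ ε) (T : X →L[ℝ] X)
    (hT : IsEpsBandPreserving ε ⇑T) :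
    ∀ x : X, ‖x‖ ≤ 1 → ∀ ε' : ℝ, ε < ε' →
      ∃ lam : ℝ, 0 < lam ∧ ∃ z : X, ‖z‖ ≤ ε' ∧ |T x| ≤ lam • |x| + z :=
  domination_of_epsBP_general ε hε T hT
end

section
/- Let K be a compact Hausdorff space, let C(K) denote the Banach lattice of continuous real-valued functions on K with supremum norm and pointwise order, let ε ≥ 0, and let T : C(K) → C(K) be a bounded linear operator that is ε-band preserving. Set φ = T(𝟙), where 𝟙 is the constant function 1. Then for every f ∈ C(K), ‖T f − φ·f‖ ≤ 2ε·‖f‖ (here φ·f denotes the pointwise product, and f ↦ φ·f is a band preserving operator). Moreover, if T is positive then φ ≥ 0. -/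
/-- `S` is band preserving (equivalently, `0`-band preserving). -/
def IsBandPreserving {X : Type*} [NormedAddCommGroup X] [Lattice X] (S : X → X) : Prop :=
  ∀ x y : X, 0 ≤ y → |x| ⊓ y = 0 → |S x| ⊓ y = 0

/-!
Fix `t ∈ K` and `g` with `g t = 0`. Clamping `g` to `[-δ, δ]` splits it as `g = h + r` with
`‖r‖ ≤ δ`, `‖h‖ ≤ ‖g‖`, and `h` vanishing on the neighbourhood `{|g| < δ}` of `t`. An Urysohn
function that is `1` at `t` and `0` where `h ≠ 0` is disjoint from `h`, so `ε`-band preservation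
gives `|T h t| ≤ ε ‖g‖`, while `|T r t| ≤ ‖T‖ δ`; letting `δ → 0`, `|T g t| ≤ ε ‖g‖`. Applied to
`g = f - f t • 𝟙`, of norm at most `2 ‖f‖`, this bounds `(T f - T 𝟙 * f) t`.
-/

section

variable {δ : ℝ}

lemma abs_max_min_le (x : ℝ) (hδ : 0 ≤ δ) : |max (min x δ) (-δ)| ≤ δ :=
  abs_le.2 ⟨le_max_right _ _, max_le (min_le_right _ _) (by linarith)⟩

lemma abs_sub_max_min_le (x : ℝ) (hδ : 0 ≤ δ) : |x - max (min x δ) (-δ)| ≤ |x| := by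
  grind

lemma sub_max_min_eq_zero {x : ℝ} (hx : |x| ≤ δ) : x - max (min x δ) (-δ) = 0 := by
  rw [abs_le] at hx
  rw [min_eq_left hx.2, max_eq_left hx.1, sub_self]

end

section

variable {K : Type*} [TopologicalSpace K] [CompactSpace K]

lemma isBandPreserving_mul_left (φ : C(K, ℝ)) :
    IsBandPreserving (fun f : C(K, ℝ) => φ * f) := by
  intro x y hy hxy
  ext s
  have hxys : min |x s| (y s) = 0 := by simpa using congrArg (· s) hxy
  have hys : 0 ≤ y s := hy s
  simp only [ContinuousMap.inf_apply, ContinuousMap.abs_apply, ContinuousMap.mul_apply,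
    ContinuousMap.zero_apply]
  rcases min_eq_iff.1 hxys with ⟨hx, -⟩ | ⟨hy0, -⟩
  · rw [abs_eq_zero.1 hx, mul_zero, abs_zero, min_eq_left hys]
  · rw [hy0, min_eq_right (abs_nonneg _)]

variable [NormalSpace K] [T1Space K]

lemma IsEpsBandPreserving.abs_apply_le_of_eq_zero_off {ε : ℝ} {T : C(K, ℝ) → C(K, ℝ)}
    (hT : IsEpsBandPreserving ε T) {h : C(K, ℝ)} {S : Set K} (hS : IsClosed S)
    (hhS : ∀ s ∉ S, h s = 0) {t : K} (ht : t ∉ S) : |T h t| ≤ ε * ‖h‖ := by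
  obtain ⟨y, hy0, hy1, hy01⟩ := exists_continuous_zero_one_of_isClosed hS isClosed_singleton
    (Set.disjoint_singleton_right.2 ht)
  -- Scaling `y` above `|T h t|` makes the infimum at `t` equal to `|T h t|`.
  set M : ℝ := ‖T h‖ + 1
  have hMy : ∀ s, 0 ≤ (M • y) s := fun s => mul_nonneg (by positivity) (hy01 s).1
  have hdisj : |h| ⊓ M • y = 0 := by
    ext s
    simp only [ContinuousMap.inf_apply, ContinuousMap.abs_apply, ContinuousMap.zero_apply]
    by_cases hs : s ∈ S
    · rw [ContinuousMap.smul_apply, hy0 hs, Pi.zero_apply, smul_zero,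
        min_eq_right (abs_nonneg _)]
    · rw [hhS s hs, abs_zero, min_eq_left (hMy s)]
  have hTht : |T h t| < M := by
    have := (T h).norm_coe_le_norm t
    rw [Real.norm_eq_abs] at this
    linarith
  calc |T h t| = (|T h| ⊓ M • y) t := by
        simp [hy1 rfl, M, min_eq_left hTht.le]
    _ ≤ ‖|T h| ⊓ M • y‖ :=
        (le_abs_self _).trans (by simpa using (|T h| ⊓ M • y).norm_coe_le_norm t)
    _ ≤ ε * ‖h‖ := hT h _ hMy hdisj

lemma IsEpsBandPreserving.abs_apply_le_of_apply_eq_zero {ε : ℝ} (hε : 0 ≤ ε)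
    {T : C(K, ℝ) →L[ℝ] C(K, ℝ)} (hT : IsEpsBandPreserving ε T) {g : C(K, ℝ)} {t : K}
    (hg : g t = 0) : |T g t| ≤ ε * ‖g‖ := by
  refine le_of_forall_pos_le_add fun η hη => ?_
  set δ : ℝ := η / (‖T‖ + 1)
  have hδ : 0 < δ := by positivity
  set r : C(K, ℝ) := (g ⊓ ContinuousMap.const K δ) ⊔ ContinuousMap.const K (-δ)
  have hr : ∀ s, r s = max (min (g s) δ) (-δ) := fun s => by simp [r]
  have hr_norm : ‖r‖ ≤ δ := (ContinuousMap.norm_le _ hδ.le).2 fun s => by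
    rw [Real.norm_eq_abs, hr]
    exact abs_max_min_le _ hδ.le
  have hgr_norm : ‖g - r‖ ≤ ‖g‖ := (ContinuousMap.norm_le _ (norm_nonneg g)).2 fun s => by
    rw [Real.norm_eq_abs, ContinuousMap.sub_apply, hr]
    exact (abs_sub_max_min_le _ hδ.le).trans (by simpa using g.norm_coe_le_norm s)
  have hgr_zero : ∀ s ∉ {s | δ ≤ |g s|}, (g - r) s = 0 := fun s hs => by
    rw [ContinuousMap.sub_apply, hr]
    exact sub_max_min_eq_zero (not_le.1 hs).le
  have h_main : |T (g - r) t| ≤ ε * ‖g‖ :=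
    (hT.abs_apply_le_of_eq_zero_off (isClosed_le continuous_const g.continuous.abs) hgr_zero
      (by simpa [hg] using hδ)).trans (mul_le_mul_of_nonneg_left hgr_norm hε)
  have h_small : |T r t| ≤ η :=
    calc |T r t| ≤ ‖T r‖ := by simpa using (T r).norm_coe_le_norm t
      _ ≤ ‖T‖ * δ :=
          (T.le_opNorm r).trans (mul_le_mul_of_nonneg_left hr_norm (norm_nonneg T))
      _ ≤ η := by
        rw [mul_div_assoc', div_le_iff₀ (by positivity)]
        nlinarith [norm_nonneg T]
  calc |T g t| = |T (g - r) t + T r t| := by simp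
    _ ≤ |T (g - r) t| + |T r t| := abs_add_le _ _
    _ ≤ ε * ‖g‖ + η := add_le_add h_main h_small

end

/-- For an `ε`-band preserving bounded operator `T` on `C(K)`, with `φ = T 𝟙`:
multiplication by `φ` is a band preserving operator satisfying `‖T f − φ f‖ ≤ 2 ε ‖f‖`
for every `f`; moreover, if `T` is positive then `φ ≥ 0`. -/
theorem epsBP_close_to_multiplication_on_CK {K : Type*} [TopologicalSpace K]
    [CompactSpace K] [T2Space K] (ε : ℝ) (hε : 0 ≤ ε)
    (T : C(K, ℝ) →L[ℝ] C(K, ℝ)) (hT : IsEpsBandPreserving ε ⇑T) :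
    (∀ f : C(K, ℝ), ‖T f - T 1 * f‖ ≤ 2 * ε * ‖f‖) ∧
    IsBandPreserving (fun f : C(K, ℝ) => T 1 * f) ∧
    ((∀ f : C(K, ℝ), 0 ≤ f → 0 ≤ T f) → 0 ≤ T 1) := by
  refine ⟨fun f => (ContinuousMap.norm_le _ (by positivity)).2 fun t => ?_,
    isBandPreserving_mul_left (T 1), fun hpos => hpos 1 zero_le_one⟩
  set g : C(K, ℝ) := f - f t • 1
  have hg_norm : ‖g‖ ≤ 2 * ‖f‖ := by
    have hconst : ‖f t • (1 : C(K, ℝ))‖ ≤ ‖f‖ :=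
      (ContinuousMap.norm_le _ (norm_nonneg f)).2 fun s => by simpa using f.norm_coe_le_norm t
    linarith [norm_sub_le f (f t • 1)]
  have hTg : T g t = (T f - T 1 * f) t := by
    simp only [g, map_sub, map_smul, ContinuousMap.sub_apply, ContinuousMap.smul_apply,
      ContinuousMap.mul_apply, smul_eq_mul]
    ring
  calc ‖(T f - T 1 * f) t‖ = |T g t| := by rw [hTg, Real.norm_eq_abs]
    _ ≤ ε * ‖g‖ := hT.abs_apply_le_of_apply_eq_zero hε (by simp [g])
    _ ≤ 2 * ε * ‖f‖ := by nlinarith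
end
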